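/- arXiv:1810.08270 — 4 statements merged into one kernel-verified Lean document; each statement's English description precedes it below -/
import Mathlib

section
/- Let S be a real-valued random variable on a probability space, let 𝒢 be a sub-σ-algebra, and let L > 0. Then there exists a real A such that, setting B = A + L and T' = A if S ≤ A, T' = B if S ≥ B, and T' = S otherwise, the number (A + B)/2 is a median of the random variable E[T' | 𝒢] (i.e., P(E[T'|𝒢] ≤ (A+B)/2) ≥ 1/2 and P(E[T'|𝒢] ≥ (A+B)/2) ≥ 1/2). -/
open MeasureTheory ProbabilityTheory Filter Set
open scoped ENNReal Topology

noncomputable section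

namespace FPPPaper

/-- Vertices of the lattice `ℤ^d`. -/
abbrev V (d : ℕ) := Fin d → ℤ

/-- A nearest-neighbor edge of `ℤ^d`, encoded as its base vertex together with the
coordinate direction: `(v, i)` is the edge joining `v` and `v + eᵢ`. -/
abbrev Edge (d : ℕ) := (Fin d → ℤ) × Fin d

/-- The `i`-th coordinate unit vector. -/
def unitVec (d : ℕ) (i : Fin d) : V d := fun j => if j = i then 1 else 0

/-- Embedding of a lattice point into Euclidean space (so that `‖emb v‖` is the
Euclidean norm of `v`). -/
def emb {d : ℕ} (v : V d) : EuclideanSpace ℝ (Fin d) := WithLp.toLp 2 (fun i => (v i : ℝ))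

/-- The sup norm `‖v‖_∞` of a lattice point. -/
def normInf {d : ℕ} (v : V d) : ℝ := ‖(fun i => (v i : ℝ) : Fin d → ℝ)‖

/-- A (finite) lattice path from `x` to `y`: a sequence of vertices in which consecutive
vertices are nearest neighbors. -/
structure LPath (d : ℕ) (x y : V d) where
  n : ℕ
  f : Fin (n + 1) → V d
  first : f 0 = x
  last : f (Fin.last n) = y
  adj : ∀ i : Fin n,
    (∃ j, f i.succ = f i.castSucc + unitVec d j) ∨ (∃ j, f i.castSucc = f i.succ + unitVec d j)

/-- The edge traversed by the path at step `i`. -/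
def edgeAt {d : ℕ} {x y : V d} (p : LPath d x y) (i : Fin p.n) : Edge d :=
  if h : ∃ j, p.f i.succ = p.f i.castSucc + unitVec d j then (p.f i.castSucc, h.choose)
  else (p.f i.succ, ((p.adj i).resolve_left h).choose)

/-- The passage time `T(Γ) = ∑_{e ∈ Γ} t_e` of a path. -/
def pathTime {d : ℕ} {x y : V d} (t : Edge d → ℝ) (p : LPath d x y) : ℝ :=
  ∑ i : Fin p.n, t (edgeAt p i)

/-- The first-passage time `T(x,y) = inf_Γ T(Γ)`. -/
def T {d : ℕ} (t : Edge d → ℝ) (x y : V d) : ℝ := ⨅ p : LPath d x y, pathTime t p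

/-- A geodesic is a path realizing the first-passage time. -/
def IsGeodesic {d : ℕ} (t : Edge d → ℝ) {x y : V d} (p : LPath d x y) : Prop :=
  pathTime t p = T t x y

/-- The edge `e` appears on the path `p`. -/
def onPath {d : ℕ} {x y : V d} (p : LPath d x y) (e : Edge d) : Prop := ∃ i, edgeAt p i = e

/-- The number of hi-mode edges (edges with `t e > d0`) on the path `p` lying in the set `A`. -/
def hiCountIn {d : ℕ} {x y : V d} (t : Edge d → ℝ) (d0 : ℝ) (p : LPath d x y)
    (A : Set (Edge d)) : ℕ :=
  Set.ncard {e : Edge d | e ∈ A ∧ onPath p e ∧ d0 < t e}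

/-- The number of hi-mode edges (edges with `t e > d0`) on the path `p`. -/
def hiCount {d : ℕ} {x y : V d} (t : Edge d → ℝ) (d0 : ℝ) (p : LPath d x y) : ℕ :=
  Set.ncard {e : Edge d | onPath p e ∧ d0 < t e}

/-- `e` has both endpoints in the box `[-r, r]^d`. -/
def edgeInBox {d : ℕ} (r : ℝ) (e : Edge d) : Prop :=
  (∀ i, |((e.1 : V d) i : ℝ)| ≤ r) ∧ (∀ i, |(((e.1 + unitVec d e.2) : V d) i : ℝ)| ≤ r)

/-- The annulus `A(j)`: `A(1) = ℬ(1)` and `A(j) = ℬ(j) \ ℬ(j-1)` for `j ≥ 2`, where `ℬ(j)`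
is the set of edges with both endpoints in `[-K^j, K^j]^d`. -/
def annulus (d : ℕ) (K : ℝ) (j : ℕ) : Set (Edge d) :=
  {e | edgeInBox (K ^ j) e ∧ (2 ≤ j → ¬ edgeInBox (K ^ (j - 1)) e)}

/-- The line through `0` and `x`. -/
def lineThrough {d : ℕ} (x : V d) : Set (EuclideanSpace ℝ (Fin d)) :=
  {z | ∃ s : ℝ, z = s • emb x}

/-- `v` lies in the cylinder `C(x; α)` of Euclidean width `‖x‖^α` around the line through
`0` and `x`. -/
def inCylinder {d : ℕ} (α : ℝ) (x v : V d) : Prop :=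
  Metric.infDist (emb v) (lineThrough x) ≤ ‖emb x‖ ^ α

/-- Both endpoints of `e` lie in the cylinder `C(x;α)`. -/
def edgeInCyl {d : ℕ} (α : ℝ) (x : V d) (e : Edge d) : Prop :=
  inCylinder α x e.1 ∧ inCylinder α x (e.1 + unitVec d e.2)

/-- Lattice paths from `0` to `x` staying inside the cylinder `C(x;α)`. -/
def CylPath (d : ℕ) (α : ℝ) (x : V d) := {p : LPath d 0 x // ∀ k, inCylinder α x (p.f k)}

/-- The restricted cylinder passage time `T(0, x; α)`. -/
def Tcyl {d : ℕ} (t : Edge d → ℝ) (α : ℝ) (x : V d) : ℝ := ⨅ p : CylPath d α x, pathTime t p.1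

/-- A geodesic for the cylinder passage time. -/
def IsCylGeodesic {d : ℕ} (t : Edge d → ℝ) (α : ℝ) (x : V d) (p : CylPath d α x) : Prop :=
  pathTime t p.1 = Tcyl t α x

/-- There is an infinite oriented open path started at the origin. -/
def OrientedPercolates (d : ℕ) (op : Edge d → Prop) : Prop :=
  ∃ γ : ℕ → V d, γ 0 = 0 ∧ ∀ k, ∃ i, γ (k + 1) = γ k + unitVec d i ∧ op (γ k, i)

/-- The origin lies in an infinite open cluster. -/
def Percolates (d : ℕ) (op : Edge d → Prop) : Prop :=
  ∃ γ : ℕ → V d, Function.Injective γ ∧ γ 0 = 0 ∧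
    ∀ k, (∃ i, γ (k + 1) = γ k + unitVec d i ∧ op (γ k, i)) ∨
      (∃ i, γ k = γ (k + 1) + unitVec d i ∧ op (γ (k + 1), i))

/-- The critical probability `p⃗_c(d)` of oriented bond percolation on `ℤ^d`: the supremum
of those `p` for which any i.i.d. Bernoulli(`p`) family of open edges a.s. produces no
infinite oriented open path from the origin. -/
def dirPc (d : ℕ) : ℝ :=
  sSup {p : ℝ | 0 ≤ p ∧ p ≤ 1 ∧
    ∀ (Ω : Type) (_ : MeasurableSpace Ω) (μ : Measure Ω), IsProbabilityMeasure μ →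
      ∀ E : Edge d → Set Ω, (∀ e, MeasurableSet (E e)) → iIndepSet E μ →
        (∀ e, μ (E e) = ENNReal.ofReal p) →
          μ {ω | OrientedPercolates d fun e => ω ∈ E e} = 0}

/-- The critical probability `p_c(d)` of bond percolation on `ℤ^d`. -/
def bondPc (d : ℕ) : ℝ :=
  sSup {p : ℝ | 0 ≤ p ∧ p ≤ 1 ∧
    ∀ (Ω : Type) (_ : MeasurableSpace Ω) (μ : Measure Ω), IsProbabilityMeasure μ →
      ∀ E : Edge d → Set Ω, (∀ e, MeasurableSet (E e)) → iIndepSet E μ →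
        (∀ e, μ (E e) = ENNReal.ofReal p) →
          μ {ω | Percolates d fun e => ω ∈ E e} = 0}

/-- `I = inf supp F`, the infimum of the support of the distribution function `F`. -/
def suppInf (F : ℝ → ℝ) : ℝ := sInf {x : ℝ | 0 < F x}

/-- Condition (1.1): `F(0) < p_c = 1/2` and `F(I) < p⃗_c` if `I > 0`. -/
def Cond11 (F : ℝ → ℝ) : Prop :=
  F 0 < 1 / 2 ∧ (0 < suppInf F → F (suppInf F) < dirPc 2)

/-- `F` is the common distribution function of the family `t`. -/
def IsCDF {Ω : Type} [MeasurableSpace Ω] (μ : Measure Ω) {ι : Type*} (t : ι → Ω → ℝ)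
    (F : ℝ → ℝ) : Prop :=
  ∀ e r, μ {ω | t e ω ≤ r} = ENNReal.ofReal (F r)

/-- The filter `‖x‖ → ∞` on `ℤ^d`. -/
def toInfty (d : ℕ) : Filter (V d) := Filter.comap (fun x : V d => ‖emb x‖) Filter.atTop

/-- `m` is a median of the random variable `X`. -/
def IsMedian {Ω : Type} [MeasurableSpace Ω] (μ : Measure Ω) (X : Ω → ℝ) (m : ℝ) : Prop :=
  (1 : ℝ≥0∞) / 2 ≤ μ {ω | X ω ≤ m} ∧ (1 : ℝ≥0∞) / 2 ≤ μ {ω | m ≤ X ω}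

/-- Truncation of `s` to the interval `[a, b]`. -/
def clamp (a b s : ℝ) : ℝ := max a (min b s)

/-- The number of hi-mode weights among the edges of `A`. -/
def hiNumIn {Ω : Type} (t : Edge 2 → Ω → ℝ) (d0 : ℝ) (A : Set (Edge 2)) (ω : Ω) : ℕ :=
  Set.ncard {e : Edge 2 | e ∈ A ∧ d0 < t e ω}

/-- The σ-algebra `σ(N⃗)` generated by the numbers of hi-mode weights in the given
family of edge sets. -/
def sigmaFam {Ω : Type} (t : Edge 2 → Ω → ℝ) (d0 : ℝ) (As : ℕ → Set (Edge 2)) :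
    MeasurableSpace Ω :=
  MeasurableSpace.comap (fun ω (j : ℕ) => hiNumIn t d0 (As j) ω) MeasurableSpace.pi

/-- The σ-algebra `σ(N⃗)` generated by the numbers of hi-mode weights in the annuli. -/
def sigmaHi {Ω : Type} (t : Edge 2 → Ω → ℝ) (d0 K : ℝ) : MeasurableSpace Ω :=
  sigmaFam t d0 (annulus 2 K)

/-- Conditional probability of the event `E` given the σ-algebra `G`. -/
def condProb {Ω : Type} [MeasurableSpace Ω] (μ : Measure Ω) (G : MeasurableSpace Ω)
    (E : Set Ω) : Ω → ℝ :=
  μ[E.indicator (fun _ => (1 : ℝ)) | G]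

/-- `√(log ‖x‖)`. -/
def slog {d : ℕ} (x : V d) : ℝ := Real.sqrt (Real.log ‖emb x‖)

/-- `M_n = (A_n + B_n)/2` where `B_n = A_n + s`. -/
def MnOf (A s : ℝ) : ℝ := (A + (A + s)) / 2

/-- The interval `I_n' = [M - s/4, M + s/4]`. -/
def In' (M s : ℝ) : Set ℝ := Set.Icc (M - s / 4) (M + s / 4)

/-- The event `E_n(j)`: every geodesic from `0` to `x` has at least `K^{j-1}` hi-mode
edges in the annulus `A(j)`. -/
def geodHiEvent {Ω : Type} (t : Edge 2 → Ω → ℝ) (d0 K : ℝ) (x : V 2) (j : ℕ) : Set Ω :=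
  {ω | ∀ p : LPath 2 0 x, IsGeodesic (fun e => t e ω) p →
    (K ^ (j - 1) : ℝ) ≤ (hiCountIn (fun e => t e ω) d0 p (annulus 2 K j) : ℝ)}

/-- `j ∈ [0.25 log_K ‖x‖_∞, 0.75 log_K ‖x‖_∞]`. -/
def jRange (K : ℝ) (x : V 2) (j : ℕ) : Prop :=
  0.25 * Real.logb K (normInf x) ≤ (j : ℝ) ∧ (j : ℝ) ≤ 0.75 * Real.logb K (normInf x)

/-- The event `{N⃗ ∈ 𝒩_n}` that the value of `N⃗` is good (Definition 2.4). -/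
def goodEvent {Ω : Type} [MeasurableSpace Ω] (μ : Measure Ω) (t : Edge 2 → Ω → ℝ)
    (d0 K : ℝ) (x : V 2) (ξ : ℝ) (I : Set ℝ) : Set Ω :=
  {ω | 1 - ξ < condProb μ (sigmaHi t d0 K) {ω' | T (fun e => t e ω') 0 x ∈ I} ω ∧
    ∀ j : ℕ, jRange K x j →
      1 - ξ < condProb μ (sigmaHi t d0 K) (geodHiEvent t d0 K x j) ω}

/-- `k₀ = ⌊log_K ‖x‖_∞⌋`. -/
def k0 (K : ℝ) (x : V 2) : ℕ := (⌊Real.logb K (normInf x)⌋).toNat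

/-- The event that every cylinder geodesic from `0` to `x` has at least `c‖x‖` hi-mode
edges in the annulus `A(k₀)`. -/
def cylGeodHiEvent {Ω : Type} (t : Edge 2 → Ω → ℝ) (d0 K c α : ℝ) (x : V 2) : Set Ω :=
  {ω | ∀ p : CylPath 2 α x, IsCylGeodesic (fun e => t e ω) α x p →
    c * ‖emb x‖ ≤ (hiCountIn (fun e => t e ω) d0 p.1 (annulus 2 K (k0 K x)) : ℝ)}

/-- The σ-algebra generated by the numbers of hi-mode weights in the annuli portions
`A(j) ∩ C(x;α)`. -/
def cylSigma {Ω : Type} (t : Edge 2 → Ω → ℝ) (d0 K α : ℝ) (x : V 2) : MeasurableSpace Ω :=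
  sigmaFam t d0 (fun j => annulus 2 K j ∩ {e | edgeInCyl α x e})

/-- The good event in the cylinder setting. -/
def cylGoodEvent {Ω : Type} [MeasurableSpace Ω] (μ : Measure Ω) (t : Edge 2 → Ω → ℝ)
    (d0 K c α : ℝ) (x : V 2) (ξ : ℝ) (I : Set ℝ) : Set Ω :=
  {ω | 1 - ξ < condProb μ (cylSigma t d0 K α x) {ω' | Tcyl (fun e => t e ω') α x ∈ I} ω ∧
    1 - ξ < condProb μ (cylSigma t d0 K α x) (cylGeodHiEvent t d0 K c α x) ω}

/-- The open cluster of `v`: all vertices joined to `v` by an open path. -/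
def openCluster {d : ℕ} (op : Edge d → Prop) (v : V d) : Set (V d) :=
  {u | ∃ p : LPath d v u, ∀ i, op (edgeAt p i)}

/-- `v` belongs to an infinite open cluster. -/
def InInfiniteCluster {d : ℕ} (op : Edge d → Prop) (v : V d) : Prop :=
  (openCluster op v).Infinite

/-!
For fixed `A`, the variable `W A = E[clamp A (A + L) S | G]` takes values in `[A, A + L]` and is
a.e. nondecreasing in `A`. Since `E[W A - A] → 0` as `A → ∞` and `E[A + L - W A] → 0` as
`A → -∞`, Markov's inequality gives `μ {W A ≤ A + L/2} ≥ 1/2` for some `A` and `< 1/2` for all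
sufficiently negative `A`. At the infimum `A*` of the `A` of the first kind both median
inequalities hold: approximate `A*` from above and from below, and use monotonicity of `W` together
with the continuity of `μ` along decreasing sequences of sets.
-/

lemma clamp_mem_Icc {a b : ℝ} (hab : a ≤ b) (s : ℝ) : clamp a b s ∈ Icc a b :=
  ⟨le_max_left _ _, max_le hab (min_le_left _ _)⟩

lemma clamp_of_le {a b s : ℝ} (hab : a ≤ b) (hs : s ≤ a) : clamp a b s = a := by
  simp only [clamp, max_def, min_def]; split_ifs <;> linarith

lemma clamp_of_ge {a b s : ℝ} (hab : a ≤ b) (hs : b ≤ s) : clamp a b s = b := by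
  simp only [clamp, max_def, min_def]; split_ifs <;> linarith

lemma clamp_add_mono {a a' : ℝ} (L s : ℝ) (h : a ≤ a') :
    clamp a (a + L) s ≤ clamp a' (a' + L) s :=
  max_le_max h (min_le_min_right s (by linarith))

section Probability

variable {Ω : Type} [MeasurableSpace Ω] {μ : Measure Ω} [IsProbabilityMeasure μ]

lemma half_le_measure_of_union_eq_univ {s t : Set Ω} (h : s ∪ t = univ) (ht : μ t ≤ 1 / 2) :
    1 / 2 ≤ μ s := by
  have h1 : 1 ≤ μ s + 1 / 2 :=
    calc 1 = μ (s ∪ t) := by rw [h, measure_univ]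
      _ ≤ μ s + μ t := measure_union_le s t
      _ ≤ μ s + 1 / 2 := by gcongr
  rwa [← ENNReal.sub_half ENNReal.one_ne_top, tsub_le_iff_right]

lemma measure_ge_lt_half_of_integral_lt {X : Ω → ℝ} (h0 : 0 ≤ᵐ[μ] X) (hX : Integrable X μ)
    {t : ℝ} (ht : 0 < t) (h : ∫ ω, X ω ∂μ < t / 2) : μ {ω | t ≤ X ω} < 1 / 2 := by
  have hmarkov := mul_meas_ge_le_integral_of_nonneg h0 hX t
  have hreal : μ.real {ω | t ≤ X ω} < 1 / 2 := by nlinarith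
  refine (ENNReal.toReal_lt_toReal (measure_ne_top _ _) (by norm_num)).1 ?_
  simpa [measureReal_def] using hreal

lemma le_measure_le_of_forall_gt {X : Ω → ℝ} (hX : AEMeasurable X μ) {m : ℝ} {p : ℝ≥0∞}
    (h : ∀ r > m, p ≤ μ {ω | X ω ≤ r}) : p ≤ μ {ω | X ω ≤ m} := by
  have hlim := tendsto_measure_biInter_gt (μ := μ) (s := fun r => {ω | X ω ≤ r}) (a := m)
    (fun r _ => hX.nullMeasurable measurableSet_Iic)
    (fun _ _ _ hij _ hω => le_trans hω hij) ⟨m + 1, by linarith, measure_ne_top _ _⟩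
  have hinter : ⋂ r > m, {ω | X ω ≤ r} = {ω | X ω ≤ m} := by
    ext ω
    simpa only [mem_iInter] using ⟨le_of_forall_gt_imp_ge_of_dense, fun h r hr => h.trans hr.le⟩
  rw [hinter] at hlim
  exact ge_of_tendsto hlim (eventually_nhdsWithin_of_forall h)

lemma le_measure_ge_of_forall_lt {X : Ω → ℝ} (hX : AEMeasurable X μ) {m : ℝ} {p : ℝ≥0∞}
    (h : ∀ r < m, p ≤ μ {ω | r ≤ X ω}) : p ≤ μ {ω | m ≤ X ω} := by
  simpa only [Pi.neg_apply, neg_le_neg_iff] using le_measure_le_of_forall_gt hX.neg (m := -m)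
    fun r hr => by simpa only [Pi.neg_apply, neg_le] using h (-r) (neg_lt.1 hr)

theorem exists_isMedian_add_of_monotone {W : ℝ → Ω → ℝ} (hW : ∀ a, AEMeasurable (W a) μ)
    (hmono : ∀ a b, a ≤ b → W a ≤ᵐ[μ] W b) (c : ℝ)
    (htop : ∃ a, 1 / 2 ≤ μ {ω | W a ω ≤ a + c})
    (hbot : ∀ᶠ a in atBot, μ {ω | W a ω ≤ a + c} < 1 / 2) :
    ∃ A, IsMedian μ (W A) (A + c) := by
  set M := {a | 1 / 2 ≤ μ {ω | W a ω ≤ a + c}}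
  have hM : BddBelow M := by
    obtain ⟨a₀, ha₀⟩ := eventually_atBot.1 hbot
    exact ⟨a₀, fun a ha => le_of_not_gt fun h => (ha₀ a h.le).not_ge ha⟩
  refine ⟨sInf M, le_measure_le_of_forall_gt (hW _) fun r hr => ?_,
    le_measure_ge_of_forall_lt (hW _) fun r hr => ?_⟩
  · obtain ⟨a, haM, ha⟩ := exists_lt_of_csInf_lt htop (show sInf M < r - c by linarith)
    refine le_trans haM (measure_mono_ae ?_)
    filter_upwards [hmono _ a (csInf_le hM haM)] with ω hω hωa
    exact hω.trans (by linarith [show W a ω ≤ a + c from hωa])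
  · have ha : r - c ∉ M := notMem_of_lt_csInf (by linarith) hM
    have hhalf : 1 / 2 ≤ μ {ω | r - c + c ≤ W (r - c) ω} := half_le_measure_of_union_eq_univ
      (eq_univ_of_forall fun ω => le_total (r - c + c) (W (r - c) ω)) (not_le.1 ha).le
    refine hhalf.trans (measure_mono_ae ?_)
    filter_upwards [hmono (r - c) (sInf M) (by linarith)] with ω hω hωa
    exact le_trans (by linarith [show r - c + c ≤ W (r - c) ω from hωa]) hω

end Probability

section FiniteMeasure

variable {Ω : Type} {m m0 : MeasurableSpace Ω} {μ : Measure Ω} [IsFiniteMeasure μ] {f : Ω → ℝ}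

lemma tendsto_integral_of_abs_le_of_eventually_eq_zero {ι : Type*} {l : Filter ι}
    [l.IsCountablyGenerated] {F : ι → Ω → ℝ} {C : ℝ} (hF : ∀ i, AEStronglyMeasurable (F i) μ)
    (hC : ∀ i ω, |F i ω| ≤ C) (hzero : ∀ ω, ∀ᶠ i in l, F i ω = 0) :
    Tendsto (fun i => ∫ ω, F i ω ∂μ) l (𝓝 0) := by
  simpa using tendsto_integral_filter_of_dominated_convergence (fun _ => C)
    (.of_forall hF) (.of_forall fun i => .of_forall (hC i)) (integrable_const C)
    (.of_forall fun ω => tendsto_const_nhds.congr' (EventuallyEq.symm (hzero ω)))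

lemma ae_mem_Icc_condExp (hm : m ≤ m0) (hf : Integrable f μ) {a b : ℝ}
    (hab : ∀ᵐ ω ∂μ, f ω ∈ Icc a b) : ∀ᵐ ω ∂μ, μ[f | m] ω ∈ Icc a b := by
  have ha := condExp_mono (m := m) (integrable_const a) hf (hab.mono fun _ h => h.1)
  have hb := condExp_mono (m := m) hf (integrable_const b) (hab.mono fun _ h => h.2)
  rw [condExp_const hm] at ha hb
  filter_upwards [ha, hb] with ω ha hb using ⟨ha, hb⟩

lemma integral_condExp_sub_const (hm : m ≤ m0) (hf : Integrable f μ) (a : ℝ) :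
    ∫ ω, (μ[f | m] ω - a) ∂μ = ∫ ω, (f ω - a) ∂μ := by
  rw [integral_sub integrable_condExp (integrable_const a), integral_sub hf (integrable_const a),
    integral_condExp hm]

lemma integral_const_sub_condExp (hm : m ≤ m0) (hf : Integrable f μ) (b : ℝ) :
    ∫ ω, (b - μ[f | m] ω) ∂μ = ∫ ω, (b - f ω) ∂μ := by
  rw [integral_sub (integrable_const b) integrable_condExp, integral_sub (integrable_const b) hf,
    integral_condExp hm]

end FiniteMeasure

section TruncatedCondExp

variable {Ω : Type} {m m0 : MeasurableSpace Ω} {μ : Measure Ω} {S : Ω → ℝ} {L : ℝ}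

lemma integrable_clamp [IsFiniteMeasure μ] (hS : Measurable S) (hL : 0 ≤ L) (A : ℝ) :
    Integrable (fun ω => clamp A (A + L) (S ω)) μ :=
  .of_mem_Icc A (A + L) (measurable_const.max (measurable_const.min hS)).aemeasurable
    (.of_forall fun ω => clamp_mem_Icc (by linarith) (S ω))

lemma abs_clamp_sub_le (hL : 0 ≤ L) (A s : ℝ) :
    |clamp A (A + L) s - A| ≤ L ∧ |A + L - clamp A (A + L) s| ≤ L := by
  obtain ⟨h₁, h₂⟩ := clamp_mem_Icc (by linarith : A ≤ A + L) s
  exact ⟨abs_le.2 ⟨by linarith, by linarith⟩, abs_le.2 ⟨by linarith, by linarith⟩⟩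

variable [IsFiniteMeasure μ]

lemma tendsto_integral_condExp_clamp_sub_atTop (hm : m ≤ m0) (hS : Measurable S) (hL : 0 ≤ L) :
    Tendsto (fun A => ∫ ω, (μ[fun ω => clamp A (A + L) (S ω) | m] ω - A) ∂μ) atTop (𝓝 0) := by
  refine (tendsto_integral_of_abs_le_of_eventually_eq_zero
    (fun A => ((integrable_clamp hS hL A).sub (integrable_const A)).1)
    (fun A ω => (abs_clamp_sub_le hL A (S ω)).1) fun ω =>
      (eventually_ge_atTop (S ω)).mono fun A hA => ?_).congr
    fun A => (integral_condExp_sub_const hm (integrable_clamp hS hL A) A).symm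
  show clamp A (A + L) (S ω) - A = 0
  rw [clamp_of_le (by linarith) hA, sub_self]

lemma tendsto_integral_sub_condExp_clamp_atBot (hm : m ≤ m0) (hS : Measurable S) (hL : 0 ≤ L) :
    Tendsto (fun A => ∫ ω, (A + L - μ[fun ω => clamp A (A + L) (S ω) | m] ω) ∂μ) atBot (𝓝 0) := by
  refine (tendsto_integral_of_abs_le_of_eventually_eq_zero
    (fun A => ((integrable_const (A + L)).sub (integrable_clamp hS hL A)).1)
    (fun A ω => (abs_clamp_sub_le hL A (S ω)).2) fun ω =>
      (eventually_le_atBot (S ω - L)).mono fun A hA => ?_).congr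
    fun A => (integral_const_sub_condExp hm (integrable_clamp hS hL A) (A + L)).symm
  show A + L - clamp A (A + L) (S ω) = 0
  rw [clamp_of_ge (by linarith) (by linarith), sub_self]

end TruncatedCondExp

theorem exists_isMedian_condExp_clamp {Ω : Type} {m m0 : MeasurableSpace Ω} {μ : Measure Ω}
    [IsProbabilityMeasure μ] (hm : m ≤ m0) {S : Ω → ℝ} (hS : Measurable S) {L : ℝ} (hL : 0 < L) :
    ∃ A, IsMedian μ (μ[fun ω => clamp A (A + L) (S ω) | m]) (A + L / 2) := by
  set W : ℝ → Ω → ℝ := fun A => μ[fun ω => clamp A (A + L) (S ω) | m]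
  have hint := integrable_clamp (μ := μ) hS hL.le
  have hW : ∀ A, ∀ᵐ ω ∂μ, W A ω ∈ Icc A (A + L) := fun A =>
    ae_mem_Icc_condExp hm (hint A) (.of_forall fun ω => clamp_mem_Icc (by linarith) (S ω))
  have hmono : ∀ a b, a ≤ b → W a ≤ᵐ[μ] W b := fun a b h =>
    condExp_mono (hint a) (hint b) (.of_forall fun ω => clamp_add_mono L (S ω) h)
  have htop : ∃ a, 1 / 2 ≤ μ {ω | W a ω ≤ a + L / 2} := by
    obtain ⟨A, hA⟩ := ((tendsto_integral_condExp_clamp_sub_atTop (μ := μ) hm hS hL.le).eventually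
      (gt_mem_nhds (by positivity : 0 < L / 2 / 2))).exists
    have hmarkov := measure_ge_lt_half_of_integral_lt ((hW A).mono fun ω h => sub_nonneg.2 h.1)
      (integrable_condExp.sub (integrable_const A)) (by positivity) hA
    refine ⟨A, half_le_measure_of_union_eq_univ (eq_univ_of_forall fun ω => ?_) hmarkov.le⟩
    exact (le_total (W A ω) (A + L / 2)).imp id fun h => show L / 2 ≤ W A ω - A by linarith
  have hbot : ∀ᶠ a in atBot, μ {ω | W a ω ≤ a + L / 2} < 1 / 2 := by
    filter_upwards [(tendsto_integral_sub_condExp_clamp_atBot (μ := μ) hm hS hL.le).eventually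
      (gt_mem_nhds (by positivity : 0 < L / 2 / 2))] with A hA
    refine (measure_mono fun ω (hω : W A ω ≤ A + L / 2) => ?_).trans_lt
      (measure_ge_lt_half_of_integral_lt ((hW A).mono fun ω h => sub_nonneg.2 h.2)
        ((integrable_const (A + L)).sub integrable_condExp) (by positivity) hA)
    show L / 2 ≤ A + L - W A ω
    linarith
  exact exists_isMedian_add_of_monotone (fun A => integrable_condExp.aemeasurable) hmono (L / 2)
    htop hbot

/-- **Lemma 2.1 (truncation lemma).** For a random variable `S`, a sub-σ-algebra `G` and
`L > 0`, there is `A ∈ ℝ` such that, with `B = A + L` and `T'` the truncation of `S` to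
`[A, B]`, the number `(A+B)/2` is a median of `E[T' | G]`. -/
theorem statement3 {Ω : Type} [m0 : MeasurableSpace Ω] (μ : Measure Ω)
    [IsProbabilityMeasure μ]
    (S : Ω → ℝ) (hS : Measurable S)
    (G : MeasurableSpace Ω) (hG : G ≤ m0)
    (L : ℝ) (hL : 0 < L) :
    ∃ A : ℝ, @IsMedian Ω m0 μ (μ[fun ω => clamp A (A + L) (S ω) | G]) ((A + (A + L)) / 2) := by
  obtain ⟨A, hA⟩ := exists_isMedian_condExp_clamp (μ := μ) hG hS hL
  exact ⟨A, by rwa [show (A + (A + L)) / 2 = A + L / 2 by ring]⟩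

end FPPPaper
end
end

section
/- Let W be a real-valued random variable with distribution function F_W, let F_W^{-1}(t) = inf{x : F_W(x) ≥ t} be its generalized inverse, and let U be uniform on [0,1]. Let X be a random variable with the law of F_W^{-1}(U) conditioned on {U ≤ 1/2}, let Z be an independent random variable with the law of F_W^{-1}(U) conditioned on {U ≥ 1/2}, and let η be an independent Bernoulli(1/2) random variable (P(η=0)=P(η=1)=1/2). Then X + η(Z − X) has the same distribution as W, and P(X ≤ Z) = 1. -/
/-!
For `u ∈ (0, 1)` the generalized inverse satisfies `F⁻¹(u) ≤ y ↔ u ≤ F(y)`, so `F⁻¹(U)` has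
the law of `W` (inverse transform sampling). Splitting `U` at `1/2` writes this law as the equal
mixture of the laws of `X` and `Z`, and choosing between `X` and `Z` with an independent fair
coin `η` produces exactly this mixture. Since `F⁻¹` is monotone on `(0, 1)`,
`X ≤ F⁻¹(1/2) ≤ Z` almost surely.
-/

open MeasureTheory ProbabilityTheory Filter Set
open scoped ENNReal Topology

noncomputable section

namespace FPPPaper

lemma ae_restrict_Icc_mem_Ioo (a b : ℝ) : ∀ᵐ u ∂volume.restrict (Icc a b), u ∈ Ioo a b := by
  rw [Measure.restrict_congr_set Ioo_ae_eq_Icc.symm]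
  exact ae_restrict_mem measurableSet_Ioo

lemma volume_inter_Icc_add_volume_inter_Icc {s : Set ℝ} (hs : MeasurableSet s) {a b c : ℝ}
    (hab : a ≤ b) (hbc : b ≤ c) :
    volume (s ∩ Icc a b) + volume (s ∩ Icc b c) = volume (s ∩ Icc a c) := by
  rw [← Icc_union_Icc_eq_Icc hab hbc, inter_union_distrib_left]
  refine (measure_union₀ (hs.inter measurableSet_Icc).nullMeasurableSet ?_).symm
  refine measure_mono_null (fun u ⟨⟨_, hu₁⟩, ⟨_, hu₂⟩⟩ => ?_) (Real.volume_singleton (a := b))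
  exact le_antisymm hu₁.2 hu₂.1

section Quantile

variable (ν : Measure ℝ)

/-- Only meaningful for `u ∈ (0, 1)`: elsewhere the set is empty or not bounded below, and
`sInf` returns a junk value. -/
def quantile (u : ℝ) : ℝ := sInf {x | u ≤ cdf ν x}

variable {ν}

lemma bddBelow_setOf_le_cdf {u : ℝ} (hu : 0 < u) : BddBelow {x | u ≤ cdf ν x} := by
  obtain ⟨b, hb⟩ := eventually_atBot.mp ((tendsto_order.mp (tendsto_cdf_atBot ν)).2 u hu)
  exact ⟨b, fun x hx => le_of_not_gt fun hxb => (hb x hxb.le).not_ge hx⟩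

lemma nonempty_setOf_le_cdf {u : ℝ} (hu : u < 1) : {x | u ≤ cdf ν x}.Nonempty :=
  ((tendsto_order.mp (tendsto_cdf_atTop ν)).1 u hu).exists.imp fun _ => le_of_lt

/-- Right continuity of the distribution function is what makes the infimum attained. -/
lemma quantile_le_iff {u : ℝ} (hu : u ∈ Ioo (0 : ℝ) 1) (y : ℝ) :
    quantile ν u ≤ y ↔ u ≤ cdf ν y := by
  refine ⟨fun h => ?_, fun h => csInf_le (bddBelow_setOf_le_cdf hu.1) h⟩
  have hright : ∀ z, y < z → u ≤ cdf ν z := fun z hz => by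
    obtain ⟨x, hx, hxz⟩ := exists_lt_of_csInf_lt (nonempty_setOf_le_cdf hu.2) (h.trans_lt hz)
    exact hx.trans (monotone_cdf ν hxz.le)
  exact ge_of_tendsto ((cdf ν).right_continuous y |>.mono Ioi_subset_Ici_self)
    (eventually_nhdsWithin_of_forall hright)

lemma monotoneOn_quantile : MonotoneOn (quantile ν) (Ioo 0 1) :=
  fun _ hu _ hv huv => (quantile_le_iff hu _).mpr (huv.trans ((quantile_le_iff hv _).mp le_rfl))

variable {a b : ℝ}

lemma aemeasurable_quantile (ha : 0 ≤ a) (hb : b ≤ 1) :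
    AEMeasurable (quantile ν) (volume.restrict (Icc a b)) := by
  rw [Measure.restrict_congr_set Ioo_ae_eq_Icc.symm]
  exact aemeasurable_restrict_of_monotoneOn measurableSet_Ioo
    (monotoneOn_quantile.mono (Ioo_subset_Ioo ha hb))

lemma map_restrict_quantile_Iic (ha : 0 ≤ a) (hb : b ≤ 1) (y : ℝ) :
    (volume.restrict (Icc a b)).map (quantile ν) (Iic y) = volume (Iic (cdf ν y) ∩ Icc a b) := by
  have hpre : quantile ν ⁻¹' Iic y =ᵐ[volume.restrict (Icc a b)] Iic (cdf ν y) := by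
    filter_upwards [ae_restrict_Icc_mem_Ioo a b] with u hu
    exact propext (quantile_le_iff (Ioo_subset_Ioo ha hb hu) y)
  rw [Measure.map_apply_of_aemeasurable (aemeasurable_quantile ha hb) measurableSet_Iic,
    measure_congr hpre, Measure.restrict_apply measurableSet_Iic]

lemma ae_map_restrict_quantile_le (ha : 0 ≤ a) (hb : b ∈ Ioo (0 : ℝ) 1) :
    ∀ᵐ x ∂(volume.restrict (Icc a b)).map (quantile ν), x ≤ quantile ν b := by
  refine (ae_map_iff (aemeasurable_quantile ha hb.2.le) measurableSet_Iic).mpr ?_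
  filter_upwards [ae_restrict_Icc_mem_Ioo a b] with u hu
  exact monotoneOn_quantile (Ioo_subset_Ioo ha hb.2.le hu) hb hu.2.le

lemma ae_map_restrict_quantile_ge (ha : a ∈ Ioo (0 : ℝ) 1) (hb : b ≤ 1) :
    ∀ᵐ x ∂(volume.restrict (Icc a b)).map (quantile ν), quantile ν a ≤ x := by
  refine (ae_map_iff (aemeasurable_quantile ha.1.le hb) measurableSet_Ici).mpr ?_
  filter_upwards [ae_restrict_Icc_mem_Ioo a b] with u hu
  exact monotoneOn_quantile ha (Ioo_subset_Ioo ha.1.le hb hu) hu.1.le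

/-- Inverse transform sampling, with `U` split at `b`. -/
lemma map_restrict_quantile_add_map_restrict_quantile [IsProbabilityMeasure ν]
    (hb₀ : 0 ≤ b) (hb₁ : b ≤ 1) :
    (volume.restrict (Icc 0 b)).map (quantile ν) + (volume.restrict (Icc b 1)).map (quantile ν)
      = ν := by
  refine Measure.ext_of_Iic _ _ fun y => ?_
  have hIcc : Iic (cdf ν y) ∩ Icc 0 1 = Icc 0 (cdf ν y) := by
    ext u
    simp only [mem_inter_iff, mem_Iic, mem_Icc]
    exact ⟨fun ⟨h₁, h₂, _⟩ => ⟨h₂, h₁⟩, fun ⟨h₁, h₂⟩ => ⟨h₂, h₁, h₂.trans (cdf_le_one ν y)⟩⟩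
  rw [Measure.add_apply, map_restrict_quantile_Iic le_rfl hb₁,
    map_restrict_quantile_Iic hb₀ le_rfl, volume_inter_Icc_add_volume_inter_Icc measurableSet_Iic
    hb₀ hb₁, hIcc, Real.volume_Icc, sub_zero, ofReal_cdf]

end Quantile

section Mixture

variable {Ω α : Type*} [MeasurableSpace Ω] {μ : Measure Ω}

lemma ae_eq_or_eq_of_measure_add_eq_one [IsProbabilityMeasure μ] [MeasurableSpace α]
    [MeasurableSingletonClass α] {η : Ω → α} (hη : Measurable η) {a b : α} (hab : a ≠ b)
    (h : μ {ω | η ω = a} + μ {ω | η ω = b} = 1) : ∀ᵐ ω ∂μ, η ω = a ∨ η ω = b := by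
  have hEa : MeasurableSet {ω | η ω = a} := hη (measurableSet_singleton a)
  have hEb : MeasurableSet {ω | η ω = b} := hη (measurableSet_singleton b)
  have hdisj : Disjoint {ω | η ω = a} {ω | η ω = b} := (disjoint_singleton.mpr hab).preimage η
  rw [← measure_union hdisj hEb] at h
  exact ae_iff.mpr ((prob_compl_eq_zero_iff (hEa.union hEb)).mpr h)

/-- `X + η (Z - X)` equals `X` on `{η = 0}` and `Z` on `{η = 1}`; independence factors the
measure of each piece. -/
lemma map_add_mul_sub_eq_smul_add_smul {X Z η : Ω → ℝ} (hX : Measurable X) (hZ : Measurable Z)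
    (hη : Measurable η) (hXη : IndepFun X η μ) (hZη : IndepFun Z η μ)
    (hη01 : ∀ᵐ ω ∂μ, η ω = 0 ∨ η ω = 1) :
    μ.map (fun ω => X ω + η ω * (Z ω - X ω))
      = μ {ω | η ω = 0} • μ.map X + μ {ω | η ω = 1} • μ.map Z := by
  set E₀ := {ω | η ω = 0}
  set E₁ := {ω | η ω = 1}
  have hE₀ : MeasurableSet E₀ := hη (measurableSet_singleton 0)
  have hE₁ : MeasurableSet E₁ := hη (measurableSet_singleton 1)
  have hdisj : Disjoint E₀ E₁ := (disjoint_singleton.mpr zero_ne_one).preimage η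
  ext s hs
  have hXE₀ : μ (X ⁻¹' s ∩ E₀) = μ E₀ * μ (X ⁻¹' s) :=
    (hXη.measure_inter_preimage_eq_mul _ _ hs (measurableSet_singleton 0)).trans (mul_comm _ _)
  have hZE₁ : μ (Z ⁻¹' s ∩ E₁) = μ E₁ * μ (Z ⁻¹' s) :=
    (hZη.measure_inter_preimage_eq_mul _ _ hs (measurableSet_singleton 1)).trans (mul_comm _ _)
  have hmix₀ : (fun ω => X ω + η ω * (Z ω - X ω)) ⁻¹' s ∩ E₀ = X ⁻¹' s ∩ E₀ := by
    ext ω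
    simp +contextual [E₀]
  have hmix₁ : (fun ω => X ω + η ω * (Z ω - X ω)) ⁻¹' s ∩ E₁ = Z ⁻¹' s ∩ E₁ := by
    ext ω
    simp +contextual [E₁]
  have hconull : μ = μ.restrict (E₀ ∪ E₁) := (Measure.restrict_eq_self_of_ae_mem hη01).symm
  rw [Measure.map_apply (by fun_prop) hs, Measure.add_apply, Measure.smul_apply,
    Measure.smul_apply, Measure.map_apply hX hs, Measure.map_apply hZ hs, smul_eq_mul,
    smul_eq_mul, ← hXE₀, ← hZE₁, ← hmix₀, ← hmix₁, ← Measure.restrict_apply' hE₀,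
    ← Measure.restrict_apply' hE₁, ← Measure.add_apply, ← Measure.restrict_union hdisj hE₁,
    ← hconull]

end Mixture

/-- **The decomposition (2.decomposition).** Let `W` have distribution function `F_W` with
generalized inverse `F_W⁻¹(t) = inf {x : F_W(x) ≥ t}`. If `X` has the law of `F_W⁻¹(U)`
conditioned on `{U ≤ 1/2}` (`U` uniform on `[0,1]`), `Z` the law of `F_W⁻¹(U)` conditioned
on `{U ≥ 1/2}`, `η` is Bernoulli(1/2), and `X, Z, η` are independent, then
`X + η(Z - X) =ᵈ W` and `ℙ(X ≤ Z) = 1`. -/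
theorem statement10 {Ω : Type} [MeasurableSpace Ω] (μ : Measure Ω) [IsProbabilityMeasure μ]
    (W : Ω → ℝ) (hW : Measurable W)
    (Finv : ℝ → ℝ)
    (hFinv : ∀ u : ℝ, Finv u = sInf {x : ℝ | u ≤ (μ {ω | W ω ≤ x}).toReal})
    (X Z η : Ω → ℝ) (hX : Measurable X) (hZ : Measurable Z) (hη : Measurable η)
    (hlawX : μ.map X =
      (2 : ℝ≥0∞) • (volume.restrict (Set.Icc (0 : ℝ) (1 / 2))).map Finv)
    (hlawZ : μ.map Z =
      (2 : ℝ≥0∞) • (volume.restrict (Set.Icc (1 / 2 : ℝ) 1)).map Finv)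
    (hη1 : μ {ω | η ω = 1} = 1 / 2) (hη0 : μ {ω | η ω = 0} = 1 / 2)
    (hindep : iIndepFun ![X, Z, η] μ) :
    μ.map (fun ω => X ω + η ω * (Z ω - X ω)) = μ.map W ∧
    μ {ω | X ω ≤ Z ω} = 1 := by
  set ν := μ.map W
  have : IsProbabilityMeasure ν := Measure.isProbabilityMeasure_map hW.aemeasurable
  have hcdf (x : ℝ) : cdf ν x = (μ {ω | W ω ≤ x}).toReal := by
    rw [cdf_eq_real, measureReal_def, Measure.map_apply hW measurableSet_Iic]
    rfl
  obtain rfl : Finv = quantile ν := funext fun u => by simp_rw [hFinv, quantile, hcdf]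
  have hXη : IndepFun X η μ := by simpa using hindep.indepFun (i := 0) (j := 2) (by decide)
  have hZη : IndepFun Z η μ := by simpa using hindep.indepFun (i := 1) (j := 2) (by decide)
  have hη01 : ∀ᵐ ω ∂μ, η ω = 0 ∨ η ω = 1 := ae_eq_or_eq_of_measure_add_eq_one hη zero_ne_one
    (by rw [hη0, hη1, ENNReal.add_halves])
  have hX_le : ∀ᵐ ω ∂μ, X ω ≤ quantile ν (1 / 2) := ae_of_ae_map hX.aemeasurable
    (hlawX ▸ Measure.ae_smul_measure (ae_map_restrict_quantile_le le_rfl (by norm_num)) 2)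
  have hZ_ge : ∀ᵐ ω ∂μ, quantile ν (1 / 2) ≤ Z ω := ae_of_ae_map hZ.aemeasurable
    (hlawZ ▸ Measure.ae_smul_measure (ae_map_restrict_quantile_ge (by norm_num) le_rfl) 2)
  have hhalf : (1 / 2 : ℝ≥0∞) * 2 = 1 := by
    rw [one_div, ENNReal.inv_mul_cancel two_ne_zero ENNReal.ofNat_ne_top]
  refine ⟨?_, (prob_compl_eq_zero_iff (measurableSet_le hX hZ)).mp
    (ae_iff.mp (hX_le.and hZ_ge |>.mono fun ω h => h.1.trans h.2))⟩
  rw [map_add_mul_sub_eq_smul_add_smul hX hZ hη hXη hZη hη01, hlawX, hlawZ, hη0, hη1,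
    smul_smul, smul_smul, hhalf, one_smul, one_smul,
    map_restrict_quantile_add_map_restrict_quantile (by norm_num) (by norm_num)]

end FPPPaper
end
end

section
/- Let X be a real-valued random variable on a probability space with X ≤ M + L/2 almost surely, where M ∈ ℝ and L > 0, let 𝒢 be a sub-σ-algebra, and let c ∈ (0, 1/2). If P(E[X | 𝒢] ≥ M + cL) ≥ c, then P(X ≥ M + (c/2)L) ≥ c²/(1 − c). -/
open MeasureTheory ProbabilityTheory Filter Set
open scoped ENNReal Topology

noncomputable section

namespace FPPPaper

section Untruncation

variable {Ω : Type*} [m0 : MeasurableSpace Ω]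

/-- Pointwise, `Y ≤ t + (s - t) · 𝟙{t ≤ Y}` whenever `Y ≤ s`. -/
theorem integral_le_add_mul_measureReal_ge_of_ae_le {ν : Measure Ω} [IsFiniteMeasure ν]
    {Y : Ω → ℝ} (hY : Integrable Y ν) {s : ℝ} (hbd : ∀ᵐ ω ∂ν, Y ω ≤ s) (t : ℝ) :
    ∫ ω, Y ω ∂ν ≤ t * ν.real univ + (s - t) * ν.real {ω | t ≤ Y ω} := by
  set B := {ω | t ≤ Y ω}
  have hB : NullMeasurableSet B ν :=
    aestronglyMeasurable_const.nullMeasurableSet_le hY.aestronglyMeasurable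
  have hind : Integrable (B.indicator fun _ => s - t) ν := (integrable_const _).indicator₀ hB
  have hpoint : ∀ᵐ ω ∂ν, Y ω ≤ t + B.indicator (fun _ => s - t) ω := by
    filter_upwards [hbd] with ω hω
    by_cases hω' : ω ∈ B
    · simp only [indicator_of_mem hω']
      linarith
    · simp only [indicator_of_notMem hω', add_zero]
      exact (not_le.mp hω').le
  calc ∫ ω, Y ω ∂ν ≤ ∫ ω, (t + B.indicator (fun _ => s - t) ω) ∂ν :=
        integral_mono_ae hY ((integrable_const t).add hind) hpoint
    _ = t * ν.real univ + (s - t) * ν.real B := by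
        rw [integral_add (integrable_const t) hind, integral_const, integral_indicator₀ hB,
          setIntegral_const, smul_eq_mul, smul_eq_mul, mul_comm, mul_comm (ν.real B)]

theorem mul_measureReal_le_setIntegral_of_le_condExp {μ : Measure Ω} [IsFiniteMeasure μ]
    {G : MeasurableSpace Ω} (hG : G ≤ m0) {X : Ω → ℝ} (hX : Integrable X μ) (a : ℝ) :
    a * μ.real {ω | a ≤ (μ[X|G]) ω} ≤ ∫ ω in {ω | a ≤ (μ[X|G]) ω}, X ω ∂μ := by
  have hA : MeasurableSet[G] {ω | a ≤ (μ[X|G]) ω} :=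
    measurableSet_le measurable_const stronglyMeasurable_condExp.measurable
  rw [← setIntegral_condExp hG hX hA]
  exact setIntegral_ge_of_const_le_real (hG _ hA) (measure_ne_top _ _) (fun _ hω => hω)
    integrable_condExp.integrableOn

end Untruncation

/-- **Untruncation** (Step 3, proof of Proposition 2.10). If `X ≤ M + L/2` a.s. and
`ℙ(E[X|𝒢] ≥ M + cL) ≥ c` with `c ∈ (0, 1/2)`, then
`ℙ(X ≥ M + (c/2)L) ≥ c²/(1-c)`. -/
theorem statement13 {Ω : Type} [m0 : MeasurableSpace Ω] (μ : Measure Ω)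
    [IsProbabilityMeasure μ]
    (X : Ω → ℝ) (hXint : Integrable X μ)
    (M L : ℝ) (hL : 0 < L)
    (hbd : ∀ᵐ ω ∂μ, X ω ≤ M + L / 2)
    (G : MeasurableSpace Ω) (hG : G ≤ m0)
    (c : ℝ) (hc : c ∈ Set.Ioo (0 : ℝ) (1 / 2))
    (h : ENNReal.ofReal c ≤ μ {ω | M + c * L ≤ (μ[X|G]) ω}) :
    ENNReal.ofReal (c ^ 2 / (1 - c)) ≤ μ {ω | M + (c / 2) * L ≤ X ω} := by
  -- `G` is also a local `MeasurableSpace Ω` instance and would otherwise be picked up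
  let _ := m0
  obtain ⟨hc0, hc2⟩ := hc
  set A := {ω | M + c * L ≤ (μ[X|G]) ω}
  set B := {ω | M + (c / 2) * L ≤ X ω}
  have hA : MeasurableSet A :=
    hG _ (measurableSet_le measurable_const stronglyMeasurable_condExp.measurable)
  have hlower := mul_measureReal_le_setIntegral_of_le_condExp hG hXint (M + c * L)
  have hupper := integral_le_add_mul_measureReal_ge_of_ae_le (ν := μ.restrict A)
    hXint.integrableOn (ae_restrict_of_ae hbd) (M + (c / 2) * L)
  rw [measureReal_restrict_apply_univ, measureReal_restrict_apply' hA] at hupper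
  have hcA : c ≤ μ.real A := (ENNReal.ofReal_le_iff_le_toReal (measure_ne_top _ _)).mp h
  have hAB : c * μ.real A ≤ (1 - c) * μ.real (B ∩ A) := by
    refine le_of_mul_le_mul_left ?_ (half_pos hL)
    linarith
  have hcB : c ^ 2 / (1 - c) ≤ μ.real (B ∩ A) := by
    rw [div_le_iff₀ (by linarith)]
    nlinarith [mul_le_mul_of_nonneg_left hcA hc0.le]
  calc ENNReal.ofReal (c ^ 2 / (1 - c)) ≤ μ (B ∩ A) := ENNReal.ofReal_le_of_le_toReal hcB
    _ ≤ μ B := measure_mono inter_subset_left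

end FPPPaper
end
end

section
/- Under Assumption 2.1 and with A_n chosen so that M_n = (A_n + B_n)/2 is a median of E[T_n | N⃗], one has P(T(0,x_n) ∈ I_n') → 1 as n → ∞. -/
open MeasureTheory ProbabilityTheory Filter Set
open scoped ENNReal Topology

noncomputable section

/-! Let `s = √(log ‖x_n‖)` and `M = M_n`. For large `n` the window
`[a_n, a_n + w_n s]` has length `≤ s/8` and probability `> 15/16`. If it were not inside
`I_n' = [M - s/4, M + s/4]`, it would lie entirely below `M - s/8` (or above `M + s/8`). Then
`T_n ≤ M - s/8 + s·1_B`, with `B` the event that `T(0,x_n)` misses the window, so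
`E[T_n | N⃗] ≥ M` forces `P(B | N⃗) ≥ 1/8`, which by Markov's inequality has probability
`≤ 8 P(B) < 1/2`; this contradicts `M` being a median of `E[T_n | N⃗]`. -/

lemma Set.ncard_eq_toReal_tsum_indicator {α : Type*} (s : Set α) :
    (s.ncard : ℝ) = (∑' a, s.indicator (fun _ => (1 : ℝ≥0∞)) a).toReal := by
  rw [← tsum_subtype, ENNReal.tsum_set_one, Set.ncard_def]
  cases s.encard <;> simp

lemma measurable_ncard_setOf {Ω ι : Type*} [MeasurableSpace Ω] [Countable ι] {p : ι → Ω → Prop}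
    (hp : ∀ i, MeasurableSet {ω | p i ω}) : Measurable fun ω => {i | p i ω}.ncard := by
  have hreal : Measurable fun ω => ({i | p i ω}.ncard : ℝ) := by
    simp only [Set.ncard_eq_toReal_tsum_indicator]
    exact (Measurable.tsum fun i => measurable_const.indicator (hp i)).ennreal_toReal
  refine measurable_to_countable' fun k => ?_
  convert hreal (measurableSet_singleton (k : ℝ)) using 1
  ext ω
  simp

section CondExp

variable {Ω : Type*} {m : MeasurableSpace Ω} [m0 : MeasurableSpace Ω] {μ : Measure Ω}
  [IsFiniteMeasure μ] {B : Set Ω}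

lemma condExp_le_add_mul_condExp_indicator (hm : m ≤ m0) {g : Ω → ℝ} (hg : Integrable g μ)
    (hB : MeasurableSet B) {c s : ℝ} (hgc : ∀ ω ∉ B, g ω ≤ c) (hgs : ∀ ω, g ω ≤ c + s) :
    μ[g|m] ≤ᵐ[μ] fun ω => c + s * μ[B.indicator (1 : Ω → ℝ)|m] ω := by
  have hind : Integrable (B.indicator (1 : Ω → ℝ)) μ := (integrable_const 1).indicator hB
  have hdom : g ≤ᵐ[μ] (fun _ => c) + s • B.indicator 1 := ae_of_all _ fun ω => by
    by_cases hω : ω ∈ B <;> simp [hω, hgc, hgs]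
  filter_upwards [condExp_mono hg ((integrable_const c).add (hind.smul s)) hdom,
    condExp_add (integrable_const c) (hind.smul s) m, condExp_smul s (B.indicator (1 : Ω → ℝ)) m]
    with ω hle hadd hsmul
  rw [hadd, Pi.add_apply, condExp_const hm, hsmul] at hle
  exact hle

lemma mul_measureReal_condExp_indicator_ge_le (hm : m ≤ m0) (hB : MeasurableSet B) (c : ℝ) :
    c * μ.real {ω | c ≤ μ[B.indicator (1 : Ω → ℝ)|m] ω} ≤ μ.real B := by
  have hnonneg : 0 ≤ᵐ[μ] μ[B.indicator (1 : Ω → ℝ)|m] :=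
    condExp_nonneg (ae_of_all _ (Set.indicator_nonneg fun _ _ => zero_le_one))
  have := mul_meas_ge_le_integral_of_nonneg hnonneg integrable_condExp c
  rwa [integral_condExp hm, integral_indicator_one hB] at this

lemma measureReal_le_condExp_lt_half (hm : m ≤ m0) {g : Ω → ℝ} (hg : Integrable g μ)
    (hB : MeasurableSet B) (hBsmall : μ.real B < 1 / 16) {M s : ℝ} (hs : 0 < s)
    (hgc : ∀ ω ∉ B, g ω ≤ M - s / 8) (hgs : ∀ ω, g ω ≤ M - s / 8 + s) :
    μ.real {ω | M ≤ μ[g|m] ω} < 1 / 2 := by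
  have hsub : {ω | M ≤ μ[g|m] ω} ≤ᵐ[μ] {ω | 1 / 8 ≤ μ[B.indicator (1 : Ω → ℝ)|m] ω} := by
    filter_upwards [condExp_le_add_mul_condExp_indicator hm hg hB hgc hgs] with ω hω hM
    have hM' : M ≤ μ[g|m] ω := hM
    by_contra hlt
    have := mul_lt_mul_of_pos_left (not_le.mp hlt) hs
    linarith
  have hmarkov := mul_measureReal_condExp_indicator_ge_le (μ := μ) hm hB (1 / 8)
  have hmono := ENNReal.toReal_mono (measure_ne_top μ _) (measure_mono_ae hsub)
  change μ.real _ ≤ μ.real _ at hmono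
  linarith

end CondExp

namespace FPPPaper

section Measurability

variable {Ω : Type} [m0 : MeasurableSpace Ω]

lemma measurable_hiNumIn {t : Edge 2 → Ω → ℝ} (ht : ∀ e, Measurable (t e)) (d0 : ℝ)
    (A : Set (Edge 2)) : Measurable (hiNumIn t d0 A) :=
  measurable_ncard_setOf fun e =>
    (MeasurableSet.const (e ∈ A)).inter (measurableSet_lt measurable_const (ht e))

lemma sigmaFam_le {t : Edge 2 → Ω → ℝ}
    (ht : ∀ e, Measurable (t e)) (d0 : ℝ) (As : ℕ → Set (Edge 2)) :
    sigmaFam t d0 As ≤ m0 :=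
  (measurable_pi_lambda _ fun j => measurable_hiNumIn ht d0 (As j)).comap_le

instance LPath.countable (d : ℕ) (x y : V d) : Countable (LPath d x y) := by
  have hinj : Function.Injective
      fun p : LPath d x y => (⟨p.n, p.f⟩ : Σ n : ℕ, Fin (n + 1) → V d) := by
    rintro ⟨n, f, _, _, _⟩ ⟨n', f', _, _, _⟩ hpq
    obtain ⟨rfl, hf⟩ := Sigma.mk.inj_iff.mp hpq
    cases eq_of_heq hf
    rfl
  exact hinj.countable

lemma measurable_T {t : Edge 2 → Ω → ℝ} (ht : ∀ e, Measurable (t e)) (x y : V 2) :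
    Measurable fun ω => T (fun e => t e ω) x y :=
  Measurable.iInf fun p => Finset.measurable_sum _ fun i _ => ht (edgeAt p i)

end Measurability

lemma IsMedian.half_le_measureReal {Ω : Type} [MeasurableSpace Ω] {μ : Measure Ω}
    [IsFiniteMeasure μ] {X : Ω → ℝ} {M : ℝ} (h : IsMedian μ X M) :
    1 / 2 ≤ μ.real {ω | X ω ≤ M} ∧ 1 / 2 ≤ μ.real {ω | M ≤ X ω} := by
  have half : ((1 : ℝ≥0∞) / 2).toReal = 1 / 2 := by norm_num
  exact ⟨half ▸ ENNReal.toReal_mono (measure_ne_top μ _) h.1,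
    half ▸ ENNReal.toReal_mono (measure_ne_top μ _) h.2⟩

lemma le_clamp (a b s : ℝ) : a ≤ clamp a b s := le_max_left _ _

lemma clamp_le {a b : ℝ} (hab : a ≤ b) (s : ℝ) : clamp a b s ≤ b :=
  max_le hab (min_le_left _ _)

lemma clamp_le_of_le {a b s c : ℝ} (ha : a ≤ c) (hs : s ≤ c) : clamp a b s ≤ c :=
  max_le ha ((min_le_right _ _).trans hs)

lemma le_clamp_of_le {a b s c : ℝ} (hb : c ≤ b) (hs : c ≤ s) : c ≤ clamp a b s :=
  le_max_of_le_right (le_min hb hs)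

lemma Icc_subset_In'_of_isMedian_condExp_clamp {Ω : Type} {m : MeasurableSpace Ω}
    [m0 : MeasurableSpace Ω] {μ : Measure Ω} [IsProbabilityMeasure μ] (hm : m ≤ m0)
    {X : Ω → ℝ} (hX : Measurable X) {a b A s : ℝ} (hs : 0 < s) (hab : b - a ≤ s / 8)
    (hconc : 15 / 16 < μ.real {ω | X ω ∈ Icc a b})
    (hmed : IsMedian μ μ[fun ω => clamp A (A + s) (X ω)|m] (MnOf A s)) :
    Icc a b ⊆ In' (MnOf A s) s := by
  set M := MnOf A s with hM
  set g := fun ω => clamp A (A + s) (X ω)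
  have hA : A = M - s / 2 := by rw [hM, MnOf]; ring
  have hg_ge (ω : Ω) : A ≤ g ω := le_clamp _ _ _
  have hg_le (ω : Ω) : g ω ≤ A + s := clamp_le (by linarith) _
  have hg : Integrable g μ :=
    .of_bound (measurable_const.max (measurable_const.min hX)).aestronglyMeasurable (|A| + s)
      (ae_of_all _ fun ω => abs_le.mpr
        ⟨by linarith [neg_abs_le A, hg_ge ω], by linarith [le_abs_self A, hg_le ω]⟩)
  have hgood : MeasurableSet {ω | X ω ∈ Icc a b} := hX measurableSet_Icc
  have hBsmall : μ.real {ω | X ω ∈ Icc a b}ᶜ < 1 / 16 := by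
    rw [probReal_compl_eq_one_sub hgood]; linarith
  have hmedR := hmed.half_le_measureReal
  by_contra hsub
  have hside : a < M - s / 4 ∨ M + s / 4 < b := by
    by_contra! h
    exact hsub (Icc_subset_Icc h.1 h.2)
  rcases hside with hlow | hhigh
  · have hgc (ω) (hω : ω ∉ {ω | X ω ∈ Icc a b}ᶜ) : g ω ≤ M - s / 8 := by
      rw [Set.notMem_compl_iff] at hω
      exact clamp_le_of_le (by linarith) (by linarith [hω.2])
    have := measureReal_le_condExp_lt_half hm hg hgood.compl hBsmall hs hgc
      (fun ω => by linarith [hg_le ω])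
    linarith [hmedR.2]
  · have hgc (ω) (hω : ω ∉ {ω | X ω ∈ Icc a b}ᶜ) : -g ω ≤ -M - s / 8 := by
      rw [Set.notMem_compl_iff] at hω
      have : M + s / 8 ≤ g ω := le_clamp_of_le (by linarith) (by linarith [hω.1])
      linarith
    have := measureReal_le_condExp_lt_half hm hg.neg hgood.compl hBsmall hs hgc
      (fun ω => by simp only [Pi.neg_apply]; linarith [hg_ge ω])
    have hneg : μ.real {ω | -M ≤ μ[-g|m] ω} = μ.real {ω | μ[g|m] ω ≤ M} := by
      refine measureReal_congr ?_
      filter_upwards [condExp_neg g m] with ω hω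
      change (-M ≤ μ[-g|m] ω) = (μ[g|m] ω ≤ M)
      rw [hω, Pi.neg_apply, neg_le_neg_iff]
    linarith [hmedR.1]

theorem statement14_general {Ω : Type} [m0 : MeasurableSpace Ω] (μ : Measure Ω)
    [IsProbabilityMeasure μ]
    (t : Edge 2 → Ω → ℝ) (ht : ∀ e, Measurable (t e))
    (d0 : ℝ)
    (K : ℝ)
    -- Assumption 2.1:
    (w : ℕ → ℝ) (hw0 : Tendsto w atTop (𝓝 0))
    (a : ℕ → ℝ)
    (x : ℕ → V 2)
    (hxinf : Tendsto (fun n => ‖emb (x n)‖) atTop atTop)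
    (hass : Tendsto (fun n => μ {ω | T (fun e => t e ω) 0 (x n) ∈
        Set.Icc (a n) (a n + w n * slog (x n))}) atTop (𝓝 1))
    -- truncation and the choice of `A_n`:
    (A : ℕ → ℝ)
    (hmed : ∀ n, @IsMedian Ω m0 μ
      (μ[fun ω => clamp (A n) (A n + slog (x n)) (T (fun e => t e ω) 0 (x n)) |
          sigmaHi t d0 K])
      (MnOf (A n) (slog (x n)))) :
    Tendsto (fun n => μ {ω | T (fun e => t e ω) 0 (x n) ∈
        In' (MnOf (A n) (slog (x n))) (slog (x n))}) atTop (𝓝 1) := by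
  have hassR := (ENNReal.tendsto_toReal ENNReal.one_ne_top).comp hass
  have hwindow : ∀ᶠ n in atTop, Icc (a n) (a n + w n * slog (x n)) ⊆
      In' (MnOf (A n) (slog (x n))) (slog (x n)) := by
    filter_upwards [hxinf.eventually_gt_atTop 1,
      hw0.eventually (eventually_le_nhds (by norm_num : (0 : ℝ) < 1 / 8)),
      hassR.eventually (eventually_gt_nhds (by norm_num : (15 / 16 : ℝ) < 1))]
      with n hx hw hconc
    have hs : 0 < slog (x n) := Real.sqrt_pos.2 (Real.log_pos hx)
    have hlen := mul_le_mul_of_nonneg_right hw hs.le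
    exact Icc_subset_In'_of_isMedian_condExp_clamp (sigmaFam_le ht d0 _)
      (measurable_T ht 0 (x n)) hs (by linarith) hconc (hmed n)
  refine tendsto_of_tendsto_of_tendsto_of_le_of_le' hass tendsto_const_nhds ?_
    (.of_forall fun n => prob_le_one)
  filter_upwards [hwindow] with n hn
  exact measure_mono fun ω hω => hn hω

/-- **Lemma 2.3.** Under Assumption 2.1 (the passage times `T(0,x_n)` concentrate in
intervals of length `w_n √(log ‖x_n‖)` with `w_n ↓ 0`), and with `A_n` chosen so that
`M_n = (A_n + B_n)/2` is a median of `E[T_n | N⃗]`, one has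
`ℙ(T(0,x_n) ∈ I_n') → 1`. -/
theorem statement14 {Ω : Type} [m0 : MeasurableSpace Ω] (μ : Measure Ω)
    [IsProbabilityMeasure μ]
    (t : Edge 2 → Ω → ℝ) (ht : ∀ e, Measurable (t e))
    (hnn : ∀ e, ∀ᵐ ω ∂μ, 0 ≤ t e ω)
    (hindep : iIndepFun t μ)
    (F : ℝ → ℝ) (hF : IsCDF μ t F) (h11 : Cond11 F)
    (d0 : ℝ) (hd0 : suppInf F < d0) (hFd0 : F d0 ∈ Set.Ioo (0 : ℝ) 1)
    (K : ℝ) (hK : 0 < K)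
    -- Assumption 2.1:
    (w : ℕ → ℝ) (hw_anti : Antitone w) (hw0 : Tendsto w atTop (𝓝 0))
    (a : ℕ → ℝ)
    (x : ℕ → V 2) (hx0 : ∀ n, x n ≠ 0)
    (hxinf : Tendsto (fun n => ‖emb (x n)‖) atTop atTop)
    (hass : Tendsto (fun n => μ {ω | T (fun e => t e ω) 0 (x n) ∈
        Set.Icc (a n) (a n + w n * slog (x n))}) atTop (𝓝 1))
    -- truncation and the choice of `A_n`:
    (A : ℕ → ℝ)
    (hmed : ∀ n, @IsMedian Ω m0 μ
      (μ[fun ω => clamp (A n) (A n + slog (x n)) (T (fun e => t e ω) 0 (x n)) |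
          sigmaHi t d0 K])
      (MnOf (A n) (slog (x n)))) :
    Tendsto (fun n => μ {ω | T (fun e => t e ω) 0 (x n) ∈
        In' (MnOf (A n) (slog (x n))) (slog (x n))}) atTop (𝓝 1) :=
  statement14_general (m0 := m0) μ t ht d0 K w hw0 a x hxinf hass A hmed

end FPPPaper
end
end
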